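/- Let V be the three-element poset {a,b,c} with a < b, a < c, and b, c incomparable, and let V(n) := V × [n] be the product of V with the n-element chain, equipped with the product order. Then the map sending each linear extension (p_1,…,p_{3n}) of V(n) (a list of all 3n elements of V(n), each appearing once, such that p_i ≤ p_j in V(n) implies i ≤ j) to the word (ℓ(p_1),…,ℓ(p_{3n})), where ℓ(x,k) equals A, B, or C according to whether x = a, b, or c, is a bijection from the set of linear extensions of V(n) onto the set of Kreweras words of length 3n. -/

import Mathlib

/-- The three letters of a Kreweras word. -/
inductive KLetter : Type
  | A | B | C
deriving DecidableEq, Repr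

open KLetter

/-- `w` is a Kreweras word of length `3 * n`: it has `n` `A`'s, `n` `B`'s, `n` `C`'s,
and every prefix has at least as many `A`'s as `B`'s and at least as many `A`'s as `C`'s. -/
def IsKrewerasWord (n : ℕ) (w : List KLetter) : Prop :=
  w.length = 3 * n ∧ w.count A = n ∧ w.count B = n ∧ w.count C = n ∧
  ∀ k : ℕ, (w.take k).count B ≤ (w.take k).count A ∧
           (w.take k).count C ≤ (w.take k).count A

/-- `kiota w` is the smallest index `ι ≥ 1` (1-indexed) such that the prefix of
length `ι` of `w` has equally many `A`'s as `B`'s, or equally many `A`'s as `C`'s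
(and `0` if no such index exists). -/
def kiota (w : List KLetter) : ℕ :=
  (((List.range (w.length + 1)).filter fun k =>
      decide (1 ≤ k) &&
      (((w.take k).count A == (w.take k).count B) ||
       ((w.take k).count A == (w.take k).count C))).headD 0)

/-- Promotion of a Kreweras word:
`pro w = (w₂, …, w_{ι-1}, A, w_{ι+1}, …, w_{3n}, w_ι)` where `ι = kiota w`. -/
def pro (w : List KLetter) : List KLetter :=
  ((w.drop 1).set (kiota w - 2) A) ++ [w.getD (kiota w - 1) A]

/-- The trip permutation `σ_w` of a Kreweras word of length `3 * n`, as a function on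
1-indexed positions: `σ_w i` is the unique element of `{1, …, 3n}` congruent to
`kiota (pro^[i-1] w) + i - 1` modulo `3 * n`. -/
def ksigma (n : ℕ) (w : List KLetter) (i : ℕ) : ℕ :=
  (kiota (pro^[i - 1] w) + i - 2) % (3 * n) + 1

/-- `keps w i` is the letter of `pro^[i-1] w` in (1-indexed) position `kiota (pro^[i-1] w)`. -/
def keps (w : List KLetter) (i : ℕ) : KLetter :=
  (pro^[i - 1] w).getD (kiota (pro^[i - 1] w) - 1) A

/-- The negation swapping `B` and `C` (and fixing `A`). -/
def negL : KLetter → KLetter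
  | A => A
  | B => C
  | C => B

open Classical in
/-- The involution `τ_i` on Kreweras words of length `3 * n`: swap the letters in
(1-indexed) positions `i` and `i + 1` if the result is again a Kreweras word,
and otherwise do nothing. -/
noncomputable def tau (n i : ℕ) (w : List KLetter) : List KLetter :=
  let w' := (w.set (i - 1) (w.getD i A)).set i (w.getD (i - 1) A)
  if IsKrewerasWord n w' then w' else w

/-- `tauDown n j = τ_j ∘ τ_{j-1} ∘ ⋯ ∘ τ_1`. -/
noncomputable def tauDown (n : ℕ) : ℕ → List KLetter → List KLetter
  | 0, w => w
  | j + 1, w => tau n (j + 1) (tauDown n j w)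

/-- `evacAux n j = (tauDown n 1) ∘ (tauDown n 2) ∘ ⋯ ∘ (tauDown n j)`. -/
noncomputable def evacAux (n : ℕ) : ℕ → List KLetter → List KLetter
  | 0, w => w
  | j + 1, w => evacAux n j (tauDown n (j + 1) w)

/-- Evacuation on Kreweras words of length `3 * n`:
`evac = (τ_1) ∘ (τ_2 ∘ τ_1) ∘ ⋯ ∘ (τ_{3n-1} ∘ ⋯ ∘ τ_2 ∘ τ_1)`. -/
noncomputable def evac (n : ℕ) (w : List KLetter) : List KLetter :=
  evacAux n (3 * n - 1) w

/-- `tauAsc n k c = τ_{k+c-1} ∘ ⋯ ∘ τ_{k+1} ∘ τ_k`. -/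
noncomputable def tauAsc (n k : ℕ) : ℕ → List KLetter → List KLetter
  | 0, w => w
  | j + 1, w => tau n (k + j) (tauAsc n k j w)

/-- `evacStarAux n j = (tauAsc n 1 (3n-1)) ∘ (tauAsc n 2 (3n-2)) ∘ ⋯ ∘ (tauAsc n j (3n-j))`. -/
noncomputable def evacStarAux (n : ℕ) : ℕ → List KLetter → List KLetter
  | 0, w => w
  | j + 1, w => evacStarAux n j (tauAsc n (j + 1) (3 * n - (j + 1)) w)

/-- Dual evacuation on Kreweras words of length `3 * n`:
`evac* = (τ_{3n-1} ∘ ⋯ ∘ τ_1) ∘ (τ_{3n-1} ∘ ⋯ ∘ τ_2) ∘ ⋯ ∘ (τ_{3n-1})`. -/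
noncomputable def evacStar (n : ℕ) (w : List KLetter) : List KLetter :=
  evacStarAux n (3 * n - 1) w

/-- The three-element "V"-shaped poset: `a < b`, `a < c`, with `b`, `c` incomparable. -/
inductive VP : Type
  | a | b | c
deriving DecidableEq

instance : PartialOrder VP where
  le x y := x = y ∨ x = VP.a
  le_refl x := Or.inl rfl
  le_trans x y z hxy hyz := by
    rcases hxy with rfl | rfl
    · exact hyz
    · exact Or.inr rfl
  le_antisymm x y hxy hyx := by
    rcases hxy with rfl | rfl
    · rfl
    · rcases hyx with rfl | rfl <;> rfl

/-- The labeling of elements of `V(n) = VP × Fin n` by letters. -/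
def vlabel {n : ℕ} (p : VP × Fin n) : KLetter :=
  match p.1 with
  | VP.a => A
  | VP.b => B
  | VP.c => C

/-- `L` is a linear extension of `V(n) = VP × Fin n` (with the product order):
a list of all elements of `V(n)`, each appearing once, such that `L_i ≤ L_j`
implies `i ≤ j`. -/
def IsLinearExtension (n : ℕ) (L : List (VP × Fin n)) : Prop :=
  L.Nodup ∧ (∀ p : VP × Fin n, p ∈ L) ∧
  ∀ i j : Fin L.length, L.get i ≤ L.get j → (i : ℕ) ≤ (j : ℕ)

/-- A connected Kreweras word: a Kreweras word of length `3 * n` having no proper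
nonempty consecutive substring which is itself a Kreweras word. -/
def ConnectedKrewerasWord (n : ℕ) (w : List KLetter) : Prop :=
  IsKrewerasWord n w ∧
  ∀ (u : List KLetter) (m : ℕ), u <:+: w → u ≠ [] → u ≠ w → ¬ IsKrewerasWord m u

/-!
In a linear extension of `V × [n]` the elements `(x, 0), (x, 1), …` of each fibre appear in
this order, so the subscript of every entry is the number of earlier entries with the same
letter: a linear extension is recovered from its word. Prefixes of a linear extension are
down-sets, and `(a, k)` lies below `(b, k)` and `(c, k)`, which gives the ballot condition.
Conversely, subscripting a Kreweras word by these occurrence counts gives a linear extension: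
the ballot condition places the `k`-th `A` before the `k`-th `B` and the `k`-th `C`.
-/

open Finset

namespace List

variable {α : Type*}

theorem Nodup.getElem_notMem_take {l : List α} (hl : l.Nodup) {i : ℕ} (hi : i < l.length) :
    l[i] ∉ l.take i := by
  intro hmem
  obtain ⟨j, hj, hji⟩ := mem_take_iff_getElem.1 hmem
  have := (hl.getElem_inj_iff).1 hji
  omega

variable [DecidableEq α]

theorem count_take_lt_count_take {l : List α} {i j : ℕ} (hi : i < l.length) (hij : i < j) :
    (l.take i).count l[i] < (l.take j).count l[i] :=
  calc (l.take i).count l[i] < (l.take (i + 1)).count l[i] := by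
        rw [← take_append_getElem hi, count_append, count_singleton_self]; omega
    _ ≤ (l.take j).count l[i] := (take_prefix_take_left hij).count_le _

theorem count_take_getElem_le_iff {l : List α} {i j : ℕ} (hi : i < l.length)
    (hj : j < l.length) (h : l[i] = l[j]) :
    (l.take i).count l[i] ≤ (l.take j).count l[j] ↔ i ≤ j := by
  constructor
  · intro hle
    by_contra! hji
    have := count_take_lt_count_take hj hji
    rw [← h] at hle this
    omega
  · intro hij
    rw [← h]
    exact (take_prefix_take_left hij).count_le _

theorem exists_getElem_eq_and_count_take_eq {a : α} :
    ∀ {l : List α} {t : ℕ}, t < l.count a →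
      ∃ i, ∃ h : i < l.length, l[i] = a ∧ (l.take i).count a = t
  | [], _, ht => by simp at ht
  | b :: l, t, ht => by
    by_cases hb : b = a
    · subst hb
      rcases t with _ | t
      · exact ⟨0, by simp, rfl, by simp⟩
      · rw [count_cons_self] at ht
        obtain ⟨i, hi, hia, hit⟩ :=
          exists_getElem_eq_and_count_take_eq (by omega : t < l.count b)
        exact ⟨i + 1, by simpa using hi, hia, by rw [take_succ_cons, count_cons_self, hit]⟩
    · rw [count_cons_of_ne hb] at ht
      obtain ⟨i, hi, hia, hit⟩ := exists_getElem_eq_and_count_take_eq ht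
      exact ⟨i + 1, by simpa using hi, hia, by rw [take_succ_cons, count_cons_of_ne hb, hit]⟩

theorem Nodup.count_map_fst_eq_card {β : Type*} [Fintype β] [DecidableEq β]
    {l : List (α × β)} (hl : l.Nodup) (a : α) :
    (l.map Prod.fst).count a = #{b | (a, b) ∈ l} := by
  rw [List.count, countP_map, countP_eq_length_filter, ← toFinset_card_of_nodup (hl.filter _)]
  refine card_nbij' Prod.snd (Prod.mk a) ?_ ?_ ?_ ?_ <;> intro p <;> aesop

end List

def VP.equivKLetter : VP ≃ KLetter where
  toFun
    | .a => A
    | .b => B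
    | .c => C
  invFun
    | A => .a
    | B => .b
    | C => .c
  left_inv x := by cases x <;> rfl
  right_inv y := by cases y <;> rfl

instance : Fintype VP :=
  ⟨{.a, .b, .c}, fun x => by cases x <;> decide⟩

theorem vlabel_eq {n : ℕ} (p : VP × Fin n) : vlabel p = VP.equivKLetter p.1 := by
  obtain ⟨x, _⟩ := p
  cases x <;> rfl

theorem map_vlabel {n : ℕ} (L : List (VP × Fin n)) :
    L.map vlabel = (L.map Prod.fst).map VP.equivKLetter := by
  rw [List.map_map]
  exact List.map_congr_left fun p _ => vlabel_eq p

theorem count_map_vlabel {n : ℕ} (L : List (VP × Fin n)) (x : VP) :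
    (L.map vlabel).count (VP.equivKLetter x) = (L.map Prod.fst).count x := by
  rw [map_vlabel, List.count_map_of_injective _ _ VP.equivKLetter.injective]

namespace IsLinearExtension

variable {n : ℕ} {L : List (VP × Fin n)}

theorem le_of_getElem_le (hL : IsLinearExtension n L) {i j : ℕ} (hi : i < L.length)
    (hj : j < L.length) (h : L[i] ≤ L[j]) : i ≤ j :=
  hL.2.2 ⟨i, hi⟩ ⟨j, hj⟩ h

theorem mem_take_of_le (hL : IsLinearExtension n L) {p q : VP × Fin n} (hpq : p ≤ q) {k : ℕ}
    (hq : q ∈ L.take k) : p ∈ L.take k := by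
  obtain ⟨j, hj, rfl⟩ := List.mem_take_iff_getElem.1 hq
  obtain ⟨i, hi, rfl⟩ := List.getElem_of_mem (hL.2.1 p)
  have := hL.le_of_getElem_le hi (by omega) hpq
  exact List.mem_take_iff_getElem.2 ⟨i, by omega, rfl⟩

theorem mk_getElem_fst_mem_take_iff (hL : IsLinearExtension n L) {i : ℕ} (hi : i < L.length)
    (t : Fin n) :
    (L[i].1, t) ∈ L.take i ↔ t < L[i].2 := by
  constructor
  · intro ht
    by_contra! hle
    exact hL.1.getElem_notMem_take hi (hL.mem_take_of_le (Prod.mk_le_mk.2 ⟨le_rfl, hle⟩) ht)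
  · intro ht
    have hmem : (L[i].1, t) ∈ L.take (i + 1) := hL.mem_take_of_le
      (Prod.mk_le_mk.2 ⟨le_rfl, ht.le⟩) (List.mem_take_iff_getElem.2 ⟨i, by omega, rfl⟩)
    rw [← List.take_append_getElem hi, List.mem_append, List.mem_singleton] at hmem
    exact hmem.resolve_right fun h => ht.ne (congrArg Prod.snd h)

theorem count_take_map_fst_getElem (hL : IsLinearExtension n L) {i : ℕ} (hi : i < L.length) :
    ((L.map Prod.fst).take i).count L[i].1 = L[i].2 := by
  rw [← List.map_take, (hL.1.sublist (List.take_sublist _ _)).count_map_fst_eq_card]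
  have hfiber : ({t | (L[i].1, t) ∈ L.take i} : Finset (Fin n)) = Finset.Iio L[i].2 := by
    ext t
    simp [hL.mk_getElem_fst_mem_take_iff hi]
  rw [hfiber, Fin.card_Iio]

theorem length_eq (hL : IsLinearExtension n L) : L.length = 3 * n := by
  rw [← List.toFinset_card_of_nodup hL.1,
    Finset.eq_univ_of_forall fun p => List.mem_toFinset.2 (hL.2.1 p), Finset.card_univ,
    Fintype.card_prod, Fintype.card_fin]
  rfl

theorem count_map_vlabel_eq (hL : IsLinearExtension n L) (x : VP) :
    (L.map vlabel).count (VP.equivKLetter x) = n := by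
  rw [count_map_vlabel, hL.1.count_map_fst_eq_card,
    Finset.filter_true_of_mem fun t _ => hL.2.1 (x, t), Finset.card_univ, Fintype.card_fin]

theorem count_take_map_vlabel_le (hL : IsLinearExtension n L) (x : VP) (k : ℕ) :
    ((L.map vlabel).take k).count (VP.equivKLetter x) ≤ ((L.map vlabel).take k).count A := by
  have hnodup := hL.1.sublist (List.take_sublist k L)
  rw [← List.map_take, show A = VP.equivKLetter .a from rfl, count_map_vlabel, count_map_vlabel,
    hnodup.count_map_fst_eq_card, hnodup.count_map_fst_eq_card]
  refine Finset.card_le_card fun t ht => ?_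
  simp only [Finset.mem_filter, Finset.mem_univ, true_and] at ht ⊢
  exact hL.mem_take_of_le (Prod.mk_le_mk.2 ⟨Or.inr rfl, le_rfl⟩) ht

theorem isKrewerasWord_map_vlabel (hL : IsLinearExtension n L) :
    IsKrewerasWord n (L.map vlabel) :=
  ⟨by rw [List.length_map, hL.length_eq], hL.count_map_vlabel_eq .a, hL.count_map_vlabel_eq .b,
    hL.count_map_vlabel_eq .c,
    fun k => ⟨hL.count_take_map_vlabel_le .b k, hL.count_take_map_vlabel_le .c k⟩⟩

theorem eq_of_map_vlabel_eq {L' : List (VP × Fin n)} (hL : IsLinearExtension n L)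
    (hL' : IsLinearExtension n L') (h : L.map vlabel = L'.map vlabel) : L = L' := by
  rw [map_vlabel, map_vlabel] at h
  replace h := List.map_injective_iff.2 VP.equivKLetter.injective h
  have hlen : L.length = L'.length := by simpa using congrArg List.length h
  refine List.ext_getElem hlen fun i hi hi' => ?_
  have hfst : L[i].1 = L'[i].1 := by simpa [hi, hi'] using congrArg (·[i]?) h
  refine Prod.ext hfst (Fin.ext ?_)
  rw [← hL.count_take_map_fst_getElem hi, ← hL'.count_take_map_fst_getElem hi', h, hfst]

end IsLinearExtension

namespace IsKrewerasWord

variable {n : ℕ} {w : List KLetter}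

theorem count_eq (hw : IsKrewerasWord n w) (x : KLetter) : w.count x = n := by
  obtain ⟨_, hA, hB, hC, _⟩ := hw
  cases x <;> assumption

theorem count_take_le_count_take_A (hw : IsKrewerasWord n w) (x : KLetter) (k : ℕ) :
    (w.take k).count x ≤ (w.take k).count A := by
  cases x
  exacts [le_rfl, (hw.2.2.2.2 k).1, (hw.2.2.2.2 k).2]

theorem count_take_getElem_lt (hw : IsKrewerasWord n w) {i : ℕ} (hi : i < w.length) :
    (w.take i).count w[i] < n := by
  simpa [hw.count_eq] using List.count_take_lt_count_take hi hi

def subscript (hw : IsKrewerasWord n w) (i : Fin w.length) : VP × Fin n :=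
  (VP.equivKLetter.symm w[(i : ℕ)],
    ⟨(w.take i).count w[(i : ℕ)], hw.count_take_getElem_lt i.2⟩)

theorem le_of_subscript_le (hw : IsKrewerasWord n w) {i j : Fin w.length}
    (h : hw.subscript i ≤ hw.subscript j) : i ≤ j := by
  obtain ⟨hletter, hrank⟩ := Prod.mk_le_mk.1 h
  rw [Fin.mk_le_mk] at hrank
  rcases hletter with heq | ha
  · exact (List.count_take_getElem_le_iff i.2 j.2 (VP.equivKLetter.symm.injective heq)).1 hrank
  · have hA : w[(i : ℕ)] = A := (Equiv.symm_apply_eq _).1 ha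
    by_contra! hji
    have := calc (w.take i).count A ≤ (w.take j).count w[(j : ℕ)] := hA ▸ hrank
      _ < (w.take (j + 1)).count w[(j : ℕ)] := List.count_take_lt_count_take j.2 (lt_add_one _)
      _ ≤ (w.take (j + 1)).count A := hw.count_take_le_count_take_A _ _
      _ ≤ (w.take i).count A := (List.take_prefix_take_left hji).count_le _
    exact lt_irrefl _ this

def toLinearExtension (hw : IsKrewerasWord n w) : List (VP × Fin n) :=
  List.ofFn hw.subscript

theorem isLinearExtension_toLinearExtension (hw : IsKrewerasWord n w) :
    IsLinearExtension n hw.toLinearExtension := by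
  refine ⟨List.nodup_ofFn.2 fun i j h => le_antisymm (hw.le_of_subscript_le h.le)
    (hw.le_of_subscript_le h.ge), fun ⟨x, t⟩ => ?_, fun ⟨i, hi⟩ ⟨j, hj⟩ h => ?_⟩
  · obtain ⟨i, hi, hix, hit⟩ := List.exists_getElem_eq_and_count_take_eq
      (a := VP.equivKLetter x) (l := w) (t := t) (by rw [hw.count_eq]; exact t.2)
    refine List.mem_ofFn.2 ⟨⟨i, hi⟩, ?_⟩
    simp [subscript, hix, hit]
  · simp only [toLinearExtension, List.get_eq_getElem, List.getElem_ofFn] at h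
    exact hw.le_of_subscript_le h

theorem map_vlabel_toLinearExtension (hw : IsKrewerasWord n w) :
    hw.toLinearExtension.map vlabel = w := by
  refine List.ext_getElem (by simp [toLinearExtension]) fun i hi _ => ?_
  simp [toLinearExtension, subscript, vlabel_eq]

end IsKrewerasWord

/-- Removing the subscripts (i.e. applying `vlabel` letterwise) is a bijection from the
set of linear extensions of `V(n) = VP × Fin n` onto the set of Kreweras words of
length `3n`. -/
theorem linear_extension_kreweras_bijection (n : ℕ) :
    Set.BijOn (fun L : List (VP × Fin n) => L.map vlabel)
      {L : List (VP × Fin n) | IsLinearExtension n L}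
      {w : List KLetter | IsKrewerasWord n w} := by
  refine ⟨fun L hL => hL.isKrewerasWord_map_vlabel,
    fun L hL L' hL' h => IsLinearExtension.eq_of_map_vlabel_eq hL hL' h, fun w hw => ?_⟩
  exact ⟨hw.toLinearExtension, hw.isLinearExtension_toLinearExtension,
    hw.map_vlabel_toLinearExtension⟩
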